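/- arXiv:2603.08098 — 7 statements merged into one kernel-verified Lean document; each statement's English description precedes it below -/
import Mathlib

section
/- Let λ ∈ (0, 1/2), b ∈ (1, 2), g ∈ (1, 2), with λ·b < 1. Define c = λ·b/(2g − 1), θ = λ·b − 2g + 2, and φ(z) = (λ·b·z + z)/(λ·b + z). Then for every z > 0: φ(c·z) > z if z < θ, and φ(c·z) < z if z > θ. -/
/-- Lemma phi (part i): `φ(c·z) > z` if `z < θ` and `φ(c·z) < z` if `z > θ`. -/
theorem lemma_phi_part_i
    (lam b g : ℝ)
    (hlam : 0 < lam ∧ lam < 1/2)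
    (hb : 1 < b ∧ b < 2)
    (hg : 1 < g ∧ g < 2)
    (hlb : lam * b < 1)
    (c θ : ℝ) (φ : ℝ → ℝ)
    (hc : c = lam * b / (2*g - 1))
    (hθ : θ = lam * b - 2*g + 2)
    (hφ : ∀ z, φ z = (lam * b * z + z) / (lam * b + z)) :
    ∀ z > 0, (z < θ → φ (c * z) > z) ∧ (z > θ → φ (c * z) < z) := by
  obtain ⟨hl0, hl1⟩ := hlam
  obtain ⟨hb1, hb2⟩ := hb
  obtain ⟨hg1, hg2⟩ := hg
  have hg0 : (0:ℝ) < 2*g - 1 := by linarith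
  have hlb0 : 0 < lam * b := mul_pos hl0 (by linarith)
  have hc0 : 0 < c := by rw [hc]; exact div_pos hlb0 hg0
  have hkey : c * (2*g - 1) = lam * b := by
    rw [hc]; field_simp
  intro z hz
  have hden : 0 < lam * b + c * z := by positivity
  constructor
  · intro hzθ
    rw [hφ, gt_iff_lt, lt_div_iff₀ hden]
    nlinarith [mul_pos (mul_pos hc0 hz) (sub_pos.mpr hzθ)]
  · intro hzθ
    rw [hφ, div_lt_iff₀ hden]
    nlinarith [mul_pos (mul_pos hc0 hz) (sub_pos.mpr hzθ)]
end

section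
/- Let λ ∈ (0, 1/2), b ∈ (1, 2), g ∈ (1, 2), c = λb/(2g−1), θ = λb − 2g + 2, φ(z) = (λbz + z)/(λb + z). Fix T ≥ θ. Suppose x, y ≥ 0 satisfy x = c·min(φ(y), T) and y = c·min(φ(x), T). If θ > 0, then either x = y = 0 or x = y = c·θ (and in the latter case φ(x) = φ(y) = θ). If θ ≤ 0, then x = y = 0. -/
/-- Lemma uniqueness: solutions of the coupled fixed-point system with cap `T`. -/
theorem lemma_uniqueness
    (lam b g : ℝ)
    (hlam : 0 < lam ∧ lam < 1/2)
    (hb : 1 < b ∧ b < 2)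
    (hg : 1 < g ∧ g < 2)
    (c θ : ℝ) (φ : ℝ → ℝ)
    (hc : c = lam * b / (2*g - 1))
    (hθ : θ = lam * b - 2*g + 2)
    (hφ : ∀ z, φ z = (lam * b * z + z) / (lam * b + z))
    (T : ℝ) (hT : T ≥ θ)
    (x y : ℝ) (hx : 0 ≤ x) (hy : 0 ≤ y)
    (hxeq : x = c * min (φ y) T)
    (hyeq : y = c * min (φ x) T) :
    (θ > 0 → (x = 0 ∧ y = 0) ∨ (x = c * θ ∧ y = c * θ ∧ φ x = θ ∧ φ y = θ)) ∧
    (θ ≤ 0 → x = 0 ∧ y = 0) := by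
  obtain ⟨hlam0, hlam1⟩ := hlam
  obtain ⟨hb1, hb2⟩ := hb
  obtain ⟨hg1, hg2⟩ := hg
  have hμ : 0 < lam * b := by positivity
  have h2g : 0 < 2 * g - 1 := by linarith
  have hc0 : 0 < c := by rw [hc]; positivity
  have hcθ : c * θ = c * (lam * b + 1) - lam * b := by
    rw [hc, hθ]; field_simp; ring
  have mono : ∀ a a' : ℝ, 0 ≤ a → a ≤ a' → φ a ≤ φ a' := by
    intro a a' ha haa
    rw [hφ, hφ]
    rw [div_le_div_iff₀ (by linarith) (by linarith)]
    nlinarith [mul_nonneg hμ.le (sub_nonneg.mpr haa),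
      mul_nonneg (mul_nonneg hμ.le hμ.le) (sub_nonneg.mpr haa)]
  have hxy : x = y := by
    rcases le_total x y with h | h
    · have h1 : φ x ≤ φ y := mono _ _ hx h
      have h2 : min (φ x) T ≤ min (φ y) T := min_le_min h1 le_rfl
      have h3 : y ≤ x :=
        le_trans (le_of_eq hyeq)
          (le_trans (mul_le_mul_of_nonneg_left h2 hc0.le) (le_of_eq hxeq.symm))
      linarith
    · have h1 : φ y ≤ φ x := mono _ _ hy h
      have h2 : min (φ y) T ≤ min (φ x) T := min_le_min h1 le_rfl
      have h3 : x ≤ y :=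
        le_trans (le_of_eq hxeq)
          (le_trans (mul_le_mul_of_nonneg_left h2 hc0.le) (le_of_eq hyeq.symm))
      linarith
  rw [← hxy] at hxeq
  have hφcθ : φ (c * θ) = θ := by
    have hden : lam * b + c * θ = c * (lam * b + 1) := by linarith
    rw [hφ, hden]
    have hnum : lam * b * (c * θ) + c * θ = c * (lam * b + 1) * θ := by ring
    rw [hnum]
    have hne : c * (lam * b + 1) ≠ 0 := by positivity
    field_simp
  have key : x = 0 ∨ x = c * θ := by
    rcases le_total (φ x) T with hle | hge
    · rw [min_eq_left hle, hφ] at hxeq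
      have hd : 0 < lam * b + x := by linarith
      have heq : x * (lam * b + x) = c * (lam * b * x + x) := by
        field_simp [hd.ne'] at hxeq
        linarith
      have hfac : x * (lam * b + x - c * (lam * b + 1)) = 0 := by nlinarith
      rcases mul_eq_zero.mp hfac with h0 | h1
      · exact Or.inl h0
      · right; linarith
    · rw [min_eq_right hge] at hxeq
      rcases le_or_gt T 0 with hT0 | hT0
      · left
        have : x ≤ 0 := by
          rw [hxeq]; exact mul_nonpos_of_nonneg_of_nonpos hc0.le hT0
        linarith
      · right
        have hxpos : 0 < x := by rw [hxeq]; exact mul_pos hc0 hT0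
        have hd : 0 < lam * b + x := by linarith
        rw [hφ] at hge
        have h5 : T * (lam * b + x) ≤ lam * b * x + x := (le_div_iff₀ hd).mp hge
        have hTθ : T ≤ θ := by nlinarith
        have hTeq : T = θ := le_antisymm hTθ hT
        rw [hxeq, hTeq]
  constructor
  · intro _
    rcases key with h0 | hcθ'
    · exact Or.inl ⟨h0, hxy ▸ h0⟩
    · exact Or.inr ⟨hcθ', hxy ▸ hcθ', by rw [hcθ', hφcθ], by rw [← hxy, hcθ', hφcθ]⟩
  · intro hθnp
    rcases key with h0 | hcθ'
    · exact ⟨h0, hxy ▸ h0⟩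
    · have : x ≤ 0 := by
        rw [hcθ']; exact mul_nonpos_of_nonneg_of_nonpos hc0.le hθnp
      have hx0 : x = 0 := le_antisymm this hx
      exact ⟨hx0, hxy ▸ hx0⟩
end

section
/- Let λ ∈ (0, 1/2), b_m strictly increasing and g_m strictly decreasing in m, all in (1, 2). Define c_m = λb_m/(2g_m − 1) and θ_m = λb_m − 2g_m + 2. Then x_m = max(0, c_m·θ_m) is weakly increasing in m, and strictly increasing on the set of m with θ_m > 0. -/
/-- `x_m = max(0, c_m·θ_m)` is weakly increasing in `m`, strictly so where `θ_m > 0`. -/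
theorem x_monotone
    (lam : ℝ) (hlam : 0 < lam ∧ lam < 1/2)
    (n : ℕ) (b g : ℕ → ℝ)
    (hb : ∀ m, 1 ≤ m → m ≤ n → 1 < b m ∧ b m < 2)
    (hg : ∀ m, 1 ≤ m → m ≤ n → 1 < g m ∧ g m < 2)
    (hbmono : ∀ m m', 1 ≤ m → m < m' → m' ≤ n → b m < b m')
    (hganti : ∀ m m', 1 ≤ m → m < m' → m' ≤ n → g m' < g m)
    (c θ x : ℕ → ℝ)
    (hc : ∀ m, c m = lam * b m / (2 * g m - 1))
    (hθ : ∀ m, θ m = lam * b m - 2 * g m + 2)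
    (hx : ∀ m, x m = max 0 (c m * θ m)) :
    (∀ m m', 1 ≤ m → m < m' → m' ≤ n → x m ≤ x m') ∧
    (∀ m m', 1 ≤ m → m < m' → m' ≤ n → 0 < θ m → x m < x m') := by
  obtain ⟨hlam0, hlam2⟩ := hlam
  have key : ∀ m m', 1 ≤ m → m < m' → m' ≤ n → 0 < θ m →
      c m * θ m < c m' * θ m' := by
    intro m m' h1 hlt h2 hθm
    have hm : m ≤ n := le_trans (le_of_lt hlt) h2
    have hm'1 : 1 ≤ m' := le_trans h1 (le_of_lt hlt)
    obtain ⟨hb1, hb2⟩ := hb m h1 hm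
    obtain ⟨hb1', hb2'⟩ := hb m' hm'1 h2
    obtain ⟨hg1, hg2⟩ := hg m h1 hm
    obtain ⟨hg1', hg2'⟩ := hg m' hm'1 h2
    have hbb := hbmono m m' h1 hlt h2
    have hgg := hganti m m' h1 hlt h2
    have hθ' : θ m < θ m' := by rw [hθ, hθ]; nlinarith
    have hd : (0:ℝ) < 2 * g m - 1 := by linarith
    have hd' : (0:ℝ) < 2 * g m' - 1 := by linarith
    have hcm : 0 < c m := by
      rw [hc]; exact div_pos (mul_pos hlam0 (by linarith)) hd
    have hcc : c m < c m' := by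
      rw [hc, hc, div_lt_div_iff₀ hd hd']
      nlinarith [mul_pos (mul_pos hlam0 (sub_pos.mpr hbb)) hd',
        mul_pos (mul_pos hlam0 (by linarith : (0:ℝ) < b m'))
          (by linarith : (0:ℝ) < g m - g m')]
    have hθm' : 0 < θ m' := lt_trans hθm hθ'
    calc c m * θ m < c m' * θ m := by exact mul_lt_mul_of_pos_right hcc hθm
      _ < c m' * θ m' := by exact mul_lt_mul_of_pos_left hθ' (lt_trans hcm hcc)
  constructor
  · intro m m' h1 hlt h2
    rw [hx, hx]
    rcases le_or_gt (θ m) 0 with h | h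
    · have : c m * θ m ≤ 0 := by
        have hm : m ≤ n := le_trans (le_of_lt hlt) h2
        obtain ⟨hg1, _⟩ := hg m h1 hm
        obtain ⟨hb1, _⟩ := hb m h1 hm
        have hcm : 0 ≤ c m := by
          rw [hc]; exact le_of_lt (div_pos (mul_pos hlam0 (by linarith)) (by linarith))
        exact mul_nonpos_of_nonneg_of_nonpos hcm h
      simp [max_eq_left this]
    · have := key m m' h1 hlt h2 h
      exact max_le_max le_rfl this.le
  · intro m m' h1 hlt h2 hθm
    rw [hx, hx]
    have hk := key m m' h1 hlt h2 hθm
    have hm : m ≤ n := le_trans (le_of_lt hlt) h2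
    obtain ⟨hg1, _⟩ := hg m h1 hm
    obtain ⟨hb1, _⟩ := hb m h1 hm
    have hcm : 0 < c m := by
      rw [hc]; exact div_pos (mul_pos hlam0 (by linarith)) (by linarith)
    have hpos : 0 < c m * θ m := mul_pos hcm hθm
    rw [max_eq_right (le_of_lt hpos), max_eq_right (le_of_lt (lt_trans hpos hk))]
    exact hk
end

section
/- Let λ ∈ (0, 1/2), b ∈ (1, 2), g ∈ (1, 2) with θ = λb − 2g + 2 > 0. Define F(k) = (λ·k·b/(2·k·g − 1))·(λ·k·b − 2·k·g + 2) for k ≥ 1 (the equilibrium refraining fraction when b and g are scaled by k). Then F′(1) < 0, i.e., the derivative of F at k = 1 is strictly negative. -/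
/-- Polarization (scaling `b` and `g` by `k`) strictly reduces the
equilibrium refraining fraction: `F′(1) < 0`. -/
theorem polarization_reduces_refraining
    (lam b g : ℝ)
    (hlam : 0 < lam ∧ lam < 1/2)
    (hb : 1 < b ∧ b < 2)
    (hg : 1 < g ∧ g < 2)
    (hθpos : 0 < lam * b - 2*g + 2)
    (F : ℝ → ℝ)
    (hF : ∀ k, F k = (lam * k * b / (2 * k * g - 1)) * (lam * k * b - 2 * k * g + 2)) :
    deriv F 1 < 0 := by
  obtain ⟨hlam0, hlam2⟩ := hlam
  obtain ⟨hb1, hb2⟩ := hb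
  obtain ⟨hg1, hg2⟩ := hg
  have hA : 0 < lam * b := by positivity
  have hs : (1:ℝ) < 2 * g - 1 := by linarith
  have hs0 : (0:ℝ) < 2 * g - 1 := by linarith
  have hden : (2 * (1:ℝ) * g - 1) ≠ 0 := by
    simp only [mul_one]; linarith
  have hAlt : lam * b < 1 := by nlinarith
  have hFe : F = fun k => (lam * k * b / (2 * k * g - 1)) * (lam * k * b - 2 * k * g + 2) :=
    funext hF
  have hu : HasDerivAt (fun k : ℝ => lam * k * b) (lam * 1 * b) 1 := by
    simpa using ((hasDerivAt_id (1:ℝ)).const_mul lam).mul_const b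
  have hv : HasDerivAt (fun k : ℝ => 2 * k * g - 1) (2 * 1 * g) 1 := by
    simpa using (((hasDerivAt_id (1:ℝ)).const_mul 2).mul_const g).sub_const 1
  have hq : HasDerivAt (fun k : ℝ => lam * k * b / (2 * k * g - 1))
      ((lam * 1 * b * (2 * 1 * g - 1) - lam * 1 * b * (2 * 1 * g)) / (2 * 1 * g - 1) ^ 2) 1 :=
    hu.div hv hden
  have hw : HasDerivAt (fun k : ℝ => lam * k * b - 2 * k * g + 2) (lam * 1 * b - 2 * 1 * g) 1 :=
    by
      have hv2 : HasDerivAt (fun k : ℝ => 2 * k * g) (2 * 1 * g) 1 := by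
        simpa using ((hasDerivAt_id (1:ℝ)).const_mul 2).mul_const g
      exact (hu.sub hv2).add_const 2
  have hD : HasDerivAt F
      (((lam * 1 * b * (2 * 1 * g - 1) - lam * 1 * b * (2 * 1 * g)) / (2 * 1 * g - 1) ^ 2)
        * (lam * 1 * b - 2 * 1 * g + 2)
        + (lam * 1 * b / (2 * 1 * g - 1)) * (lam * 1 * b - 2 * 1 * g)) 1 := by
    rw [hFe]; exact hq.mul hw
  rw [hD.deriv]
  have h1 : ((lam * 1 * b * (2 * 1 * g - 1) - lam * 1 * b * (2 * 1 * g)) / (2 * 1 * g - 1) ^ 2)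
      * (lam * 1 * b - 2 * 1 * g + 2) < 0 := by
    apply mul_neg_of_neg_of_pos
    · apply div_neg_of_neg_of_pos
      · nlinarith
      · simp only [mul_one]; positivity
    · simp only [mul_one]; linarith
  have h2 : (lam * 1 * b / (2 * 1 * g - 1)) * (lam * 1 * b - 2 * 1 * g) < 0 := by
    apply mul_neg_of_pos_of_neg
    · simp only [mul_one]; positivity
    · nlinarith
  linarith
end

section
/- Let λ ∈ (0, 1/2), b ∈ (1, 2), g ∈ (1, 2), c = λb/(2g−1), θ = λb−2g+2 > 0, let φ denote the map w ↦ c·(λb·w + w)/(λb + w), and let x* = c·θ be its positive fixed point. Then |c·(λb·x+x)/(λb+x) − x*| < |x − x*| for all x > 0 with x ≠ x*. -/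
/-- Dynamic stability of the interior fixed point `x* = c·θ`: the best-response
map moves every positive point strictly closer to `x*`. -/
theorem interior_fixed_point_attracting
    (lam b g : ℝ)
    (hlam : 0 < lam ∧ lam < 1/2)
    (hb : 1 < b ∧ b < 2)
    (hg : 1 < g ∧ g < 2)
    (c θ xstar : ℝ)
    (hc : c = lam * b / (2*g - 1))
    (hθ : θ = lam * b - 2*g + 2)
    (hθpos : 0 < θ)
    (hxstar : xstar = c * θ) :
    ∀ x > 0, x ≠ xstar →
      |c * (lam * b * x + x) / (lam * b + x) - xstar| < |x - xstar| := by
  intro x hx hne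
  have hL : 0 < lam * b := mul_pos hlam.1 (lt_trans one_pos hb.1)
  have hg1 : (0:ℝ) < 2 * g - 1 := by linarith [hg.1]
  have hLx : 0 < lam * b + x := by linarith
  have key : c * (lam * b * x + x) / (lam * b + x) - xstar
      = (lam * b / (lam * b + x)) * (x - xstar) := by
    subst hxstar hc hθ
    field_simp
    ring
  rw [key, abs_mul]
  have hfrac : |lam * b / (lam * b + x)| < 1 := by
    rw [abs_of_pos (div_pos hL hLx)]
    rw [div_lt_one hLx]
    linarith
  have hpos : 0 < |x - xstar| := abs_pos.mpr (sub_ne_zero.mpr hne)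
  calc |lam * b / (lam * b + x)| * |x - xstar| < 1 * |x - xstar| :=
        mul_lt_mul_of_pos_right hfrac hpos
    _ = |x - xstar| := one_mul _
end

section
/- Let λ ∈ (0, 1/2), b ∈ (1, 2), g ∈ (1, 2) with θ = λb − 2g + 2 > 0, c = λb/(2g−1), and T(x) = c·(1+λb)·x/(λb + x). Then the fixed point x = 0 of T is not dynamically stable: for every δ > 0 there exists x ∈ (0, δ) with |T(x) − T(0)| > |x − 0|, i.e., T(x) > x. -/
/-- When `θ > 0`, the breakdown fixed point `x = 0` is not dynamically stable. -/
theorem breakdown_not_stable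
    (lam b g : ℝ)
    (hlam : 0 < lam ∧ lam < 1/2)
    (hb : 1 < b ∧ b < 2)
    (hg : 1 < g ∧ g < 2)
    (c θ : ℝ)
    (hc : c = lam * b / (2*g - 1))
    (hθ : θ = lam * b - 2*g + 2)
    (hθpos : 0 < θ)
    (T : ℝ → ℝ)
    (hT : ∀ x, T x = c * (1 + lam * b) * x / (lam * b + x)) :
    ∀ δ > 0, ∃ x, 0 < x ∧ x < δ ∧ |T x - T 0| > |x - 0| ∧ T x > x := by
  intro δ hδ
  have hlb : 0 < lam * b := mul_pos hlam.1 (lt_trans one_pos hb.1)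
  have hg1 : 0 < 2 * g - 1 := by linarith [hg.1]
  have hM : 0 < c * (1 + lam * b) - lam * b := by
    rw [hc]
    rw [div_mul_eq_mul_div, sub_pos, lt_div_iff₀ hg1]
    nlinarith
  set M := c * (1 + lam * b) - lam * b with hMdef
  refine ⟨min δ M / 2, by positivity, ?_, ?_, ?_⟩
  · calc min δ M / 2 ≤ δ / 2 := by gcongr; exact min_le_left _ _
      _ < δ := by linarith
  all_goals {
    set x := min δ M / 2 with hx
    have hx0 : 0 < x := by positivity
    have hxM : x < M := by
      have h1 : min δ M ≤ M := min_le_right _ _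
      rw [hx]; linarith
    have hden : 0 < lam * b + x := by positivity
    have hTx : T x > x := by
      rw [hT x, gt_iff_lt, lt_div_iff₀ hden]
      nlinarith
    have hT0 : T 0 = 0 := by rw [hT 0]; simp
    first
      | (rw [hT0, sub_zero, sub_zero, abs_of_pos hx0,
          abs_of_pos (lt_trans hx0 hTx)]; exact hTx)
      | exact hTx }
end

section
/- Let λ ∈ (0, 1/2), b ∈ (1, 2), g ∈ (1, 2) with θ = λb − 2g + 2 ≤ 0, c = λb/(2g−1), and T(x) = c·(1+λb)·x/(λb + x). Then T(x) < x for all x > 0, and 0 is the unique nonnegative fixed point of T; moreover 0 is dynamically stable: |T(x)| < |x| for all x > 0. -/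
/-- When `θ ≤ 0`, the breakdown fixed point `x = 0` is the unique nonnegative
fixed point and is dynamically stable. -/
theorem breakdown_stable
    (lam b g : ℝ)
    (hlam : 0 < lam ∧ lam < 1/2)
    (hb : 1 < b ∧ b < 2)
    (hg : 1 < g ∧ g < 2)
    (c θ : ℝ)
    (hc : c = lam * b / (2*g - 1))
    (hθ : θ = lam * b - 2*g + 2)
    (hθnonpos : θ ≤ 0)
    (T : ℝ → ℝ)
    (hT : ∀ x, T x = c * (1 + lam * b) * x / (lam * b + x)) :
    (∀ x > 0, T x < x) ∧
    (∀ x ≥ (0:ℝ), T x = x → x = 0) ∧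
    (∀ x > 0, |T x| < |x|) := by
  obtain ⟨hl0, hl2⟩ := hlam
  obtain ⟨hb1, hb2⟩ := hb
  obtain ⟨hg1, hg2⟩ := hg
  have hlb : 0 < lam * b := by nlinarith
  have hg' : 0 < 2*g - 1 := by linarith
  have hc0 : 0 ≤ c := by rw [hc]; positivity
  have hkey : c * (1 + lam * b) ≤ lam * b := by
    rw [hc, div_mul_eq_mul_div, div_le_iff₀ hg']
    nlinarith
  have hmain : ∀ x > 0, T x < x := by
    intro x hx
    rw [hT, div_lt_iff₀ (by linarith : 0 < lam * b + x)]
    nlinarith [mul_le_mul_of_nonneg_right hkey hx.le]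
  refine ⟨hmain, ?_, ?_⟩
  · intro x hx hfix
    rcases lt_or_eq_of_le hx with h | h
    · exact absurd hfix (ne_of_lt (hmain x h))
    · exact h.symm
  · intro x hx
    have hTnn : 0 ≤ T x := by
      rw [hT]; positivity
    rw [abs_of_nonneg hTnn, abs_of_pos hx]
    exact hmain x hx
end
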